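/- (Nested submodel) Let A ⊂ {1,…,d} and B ⊂ A with N̄_G(A) = N̄_G(B). Under MMG-PAI, the imputation submodel for B equals the marginal of the submodel for A: p(x_B | x_{N_G(B)}, R_B = 0, R_{N_G(B)} = 1) = p(x_A | x_{N_G(A)}, R_A = 0, R_{N_G(A)} = 1) / ∫ p(x_A | x_{N_G(A)}, R_A = 0, R_{N_G(A)} = 1) dx_B. -/
import Mathlib


open Finset
open scoped Classical

section MMG

variable {d : ℕ} {S : Type} [Fintype S]

/-- Graph neighborhood of a vertex set. -/
def nbd (G : SimpleGraph (Fin d)) (s : Set (Fin d)) : Set (Fin d) :=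
  {v | v ∉ s ∧ ∃ u ∈ s, G.Adj u v}

/-- Reachability within a set `M`. -/
def reachIn (G : SimpleGraph (Fin d)) (M : Set (Fin d)) (u v : Fin d) : Prop :=
  u ∈ M ∧ Relation.ReflTransGen (fun a b => b ∈ M ∧ G.Adj a b) u v

/-- Connected component of `M` containing `v`. -/
def compOf (G : SimpleGraph (Fin d)) (M : Set (Fin d)) (v : Fin d) : Set (Fin d) :=
  {u | reachIn G M v u}

/-- Connected components of `M` in `G`. -/
def components (G : SimpleGraph (Fin d)) (M : Set (Fin d)) : Set (Set (Fin d)) :=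
  {c | ∃ v ∈ M, c = compOf G M v}

def missingSet (r : Fin d → Bool) : Set (Fin d) := {j | r j = false}

def obsSet (r : Fin d → Bool) : Set (Fin d) := {j | r j = true}

/-- The event that all variables in `E` are observed. -/
def obsEv (E : Set (Fin d)) (r : Fin d → Bool) : Prop := ∀ j ∈ E, r j = true

/-- The density `p(x_A, R = r)`: marginalize all coordinates outside `A`. -/
noncomputable def margOn (p : (Fin d → S) → (Fin d → Bool) → ℝ)
    (A : Set (Fin d)) (x : Fin d → S) (r : Fin d → Bool) : ℝ :=
  ∑ y : Fin d → S, if ∀ j ∈ A, y j = x j then p y r else 0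

/-- The density `p(x_A, R_E = 1)`. -/
noncomputable def margObs (p : (Fin d → S) → (Fin d → Bool) → ℝ)
    (A E : Set (Fin d)) (x : Fin d → S) : ℝ :=
  ∑ r : Fin d → Bool, if obsEv E r then margOn p A x r else 0

/-- The conditional density `p(x_T | x_C, R = r)`. -/
noncomputable def condAt (p : (Fin d → S) → (Fin d → Bool) → ℝ)
    (T C : Set (Fin d)) (r : Fin d → Bool) (x : Fin d → S) : ℝ :=
  margOn p (T ∪ C) x r / margOn p C x r

/-- The conditional density `p(x_T | x_C, R_E = 1)`. -/
noncomputable def condObs (p : (Fin d → S) → (Fin d → Bool) → ℝ)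
    (T C E : Set (Fin d)) (x : Fin d → S) : ℝ :=
  margObs p (T ∪ C) E x / margObs p C E x

/-- PAI-identified submodel `p(x_T | x_{N_G(T)}, R_{N̄_G(T)} = 1)`. -/
noncomputable def condPAI (p : (Fin d → S) → (Fin d → Bool) → ℝ)
    (G : SimpleGraph (Fin d)) (T : Set (Fin d)) (x : Fin d → S) : ℝ :=
  condObs p T (nbd G T) (T ∪ nbd G T) x

/-- MMG imputation model: product of PAI submodels over connected components of missing set. -/
noncomputable def mmgModel (p : (Fin d → S) → (Fin d → Bool) → ℝ)
    (G : SimpleGraph (Fin d)) (x : Fin d → S) (r : Fin d → Bool) : ℝ :=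
  ∏ c ∈ (Set.toFinite (components G (missingSet r))).toFinset, condPAI p G c x

end MMG

/-- Conditional density `p(x_T | x_C, R ∈ Ev)` for an event `Ev` on response patterns. -/
noncomputable def condOn {d : ℕ} {S : Type} [Fintype S]
    (p : (Fin d → S) → (Fin d → Bool) → ℝ) (T C : Set (Fin d))
    (Ev : (Fin d → Bool) → Prop) (x : Fin d → S) : ℝ :=
  (∑ r : Fin d → Bool, if Ev r then margOn p (T ∪ C) x r else 0)
    / (∑ r : Fin d → Bool, if Ev r then margOn p C x r else 0)

/-- The event `R_A = 0, R_{N_G(A)} = 1`. -/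
def patEv {d : ℕ} (G : SimpleGraph (Fin d)) (A : Set (Fin d)) (r : Fin d → Bool) : Prop :=
  (∀ j ∈ A, r j = false) ∧ (∀ k ∈ nbd G A, r k = true)

lemma margOn_congr' {d : ℕ} {S : Type} [Fintype S]
    (p : (Fin d → S) → (Fin d → Bool) → ℝ) (C : Set (Fin d))
    {x y : Fin d → S} (h : ∀ j ∈ C, y j = x j) (r : Fin d → Bool) :
    margOn p C y r = margOn p C x r := by
  unfold margOn
  apply Finset.sum_congr rfl
  intro z _
  refine if_congr ?_ rfl rfl
  constructor
  · intro hz j hj; rw [hz j hj, h j hj]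
  · intro hz j hj; rw [hz j hj, ← h j hj]

lemma sum_marg' {d : ℕ} {S : Type} [Fintype S]
    (p : (Fin d → S) → (Fin d → Bool) → ℝ) (E B : Set (Fin d))
    (hBE : B ⊆ E) (x : Fin d → S) (r : Fin d → Bool) :
    (∑ y : Fin d → S, if ∀ j, j ∉ B → y j = x j then margOn p E y r else 0)
      = margOn p (E ∩ Bᶜ) x r := by
  classical
  have step1 : ∀ y : Fin d → S,
      (if ∀ j, j ∉ B → y j = x j then margOn p E y r else 0)
      = ∑ z : Fin d → S,
          if (∀ j, j ∉ B → y j = x j) ∧ (∀ j ∈ E, z j = y j) then p z r else 0 := by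
    intro y
    unfold margOn
    split_ifs with h
    · exact Finset.sum_congr rfl fun z _ => if_congr (and_iff_right h).symm rfl rfl
    · simp [h]
  simp only [step1]
  rw [Finset.sum_comm]
  unfold margOn
  apply Finset.sum_congr rfl
  intro z _
  by_cases hR : ∀ j ∈ E ∩ Bᶜ, z j = x j
  · rw [if_pos hR]
    set y0 : Fin d → S := fun j => if j ∈ B then z j else x j with hy0
    rw [Finset.sum_eq_single y0]
    · rw [if_pos]
      constructor
      · intro j hj; simp [hy0, hj]
      · intro j hj
        by_cases hjB : j ∈ B
        · simp [hy0, hjB]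
        · simp only [hy0, if_neg hjB]
          exact hR j ⟨hj, hjB⟩
    · intro y _ hy
      rw [if_neg]
      rintro ⟨h1, h2⟩
      apply hy
      funext j
      by_cases hjB : j ∈ B
      · simp only [hy0, if_pos hjB]
        exact (h2 j (hBE hjB)).symm
      · simp only [hy0, if_neg hjB]
        exact h1 j hjB
    · intro h; exact absurd (Finset.mem_univ y0) h
  · rw [if_neg hR]
    apply Finset.sum_eq_zero
    intro y _
    rw [if_neg]
    rintro ⟨h1, h2⟩
    apply hR
    intro j hj
    rw [h2 j hj.1, h1 j hj.2]

lemma sum_margObs' {d : ℕ} {S : Type} [Fintype S]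
    (p : (Fin d → S) → (Fin d → Bool) → ℝ) (E B : Set (Fin d))
    (hBE : B ⊆ E) (x : Fin d → S) :
    (∑ y : Fin d → S, if ∀ j, j ∉ B → y j = x j then margObs p E E y else 0)
      = margObs p (E ∩ Bᶜ) E x := by
  classical
  unfold margObs
  have step : ∀ y : Fin d → S,
      (if ∀ j, j ∉ B → y j = x j
        then ∑ r : Fin d → Bool, if obsEv E r then margOn p E y r else 0 else 0)
      = ∑ r : Fin d → Bool,
          if obsEv E r then (if ∀ j, j ∉ B → y j = x j then margOn p E y r else 0) else 0 := by
    intro y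
    split_ifs with h <;> simp [h]
  simp only [step]
  rw [Finset.sum_comm]
  apply Finset.sum_congr rfl
  intro r _
  by_cases hq : obsEv E r
  · simp only [if_pos hq]
    exact sum_marg' p E B hBE x r
  · simp [hq]

/-- nested submodel.
For `B ⊆ A` with `N̄_G(A) = N̄_G(B)`, under MMG-PAI the imputation submodel for `B` is the
marginal (over `x_B`) of the submodel for `A`:
`p(x_B | x_{N_G(B)}, R_B=0, R_{N_G(B)}=1)
  = p(x_A | x_{N_G(A)}, R_A=0, R_{N_G(A)}=1) / ∫ p(x_A | x_{N_G(A)}, ⋯) dx_B`. -/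
theorem stmt15 {d : ℕ} {S : Type} [Fintype S] (G : SimpleGraph (Fin d))
    (p : (Fin d → S) → (Fin d → Bool) → ℝ)
    (A B : Set (Fin d)) (hBA : B ⊆ A)
    (hNN : A ∪ nbd G A = B ∪ nbd G B)
    (hPAIA : ∀ x, condOn p A (nbd G A) (patEv G A) x
        = condObs p A (nbd G A) (A ∪ nbd G A) x)
    (hPAIB : ∀ x, condOn p B (nbd G B) (patEv G B) x
        = condObs p B (nbd G B) (B ∪ nbd G B) x)
    (hposA : ∀ x, (∑ r : Fin d → Bool, if patEv G A r then margOn p (nbd G A) x r else 0) ≠ 0)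
    (hposB : ∀ x, (∑ r : Fin d → Bool, if patEv G B r then margOn p (nbd G B) x r else 0) ≠ 0)
    (hposObsA : ∀ x, margObs p (nbd G A) (A ∪ nbd G A) x ≠ 0)
    (hposObsB : ∀ x, margObs p (nbd G B) (B ∪ nbd G B) x ≠ 0)
    (hposInt : ∀ x : Fin d → S, (∑ y : Fin d → S,
        if ∀ j, j ∉ B → y j = x j then condOn p A (nbd G A) (patEv G A) y else 0) ≠ 0) :
    ∀ x : Fin d → S, condOn p B (nbd G B) (patEv G B) x
      = condOn p A (nbd G A) (patEv G A) x
        / (∑ y : Fin d → S,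
            if ∀ j, j ∉ B → y j = x j then condOn p A (nbd G A) (patEv G A) y else 0) := by
  intro x
  have hBE : B ⊆ A ∪ nbd G A := fun j hj => Or.inl (hBA hj)
  have hnbdAB : ∀ j ∈ nbd G A, j ∉ B := fun j hj hjB => hj.1 (hBA hjB)
  have hnbdB_eq : nbd G B = (A ∪ nbd G A) ∩ Bᶜ := by
    ext j
    constructor
    · intro hj
      refine ⟨?_, hj.1⟩
      rw [hNN]; exact Or.inr hj
    · rintro ⟨hjE, hjB⟩
      have hj' : j ∈ B ∪ nbd G B := by rw [← hNN]; exact hjE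
      rcases hj' with h | h
      · exact absurd h hjB
      · exact h
  have hbA : margObs p (nbd G A) (A ∪ nbd G A) x ≠ 0 := hposObsA x
  have hbB : margObs p (nbd G B) (A ∪ nbd G A) x ≠ 0 := by
    rw [hNN]; exact hposObsB x
  have hden : (∑ y : Fin d → S,
      if ∀ j, j ∉ B → y j = x j then condOn p A (nbd G A) (patEv G A) y else 0)
      = margObs p (nbd G B) (A ∪ nbd G A) x / margObs p (nbd G A) (A ∪ nbd G A) x := by
    have h1 : ∀ y : Fin d → S,
        (if ∀ j, j ∉ B → y j = x j then condOn p A (nbd G A) (patEv G A) y else 0)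
        = (if ∀ j, j ∉ B → y j = x j then margObs p (A ∪ nbd G A) (A ∪ nbd G A) y else 0)
            / margObs p (nbd G A) (A ∪ nbd G A) x := by
      intro y
      split_ifs with h
      · rw [hPAIA y]
        unfold condObs
        congr 1
        unfold margObs
        apply Finset.sum_congr rfl
        intro r _
        split_ifs with hr
        · exact margOn_congr' p (nbd G A) (fun j hj => h j (hnbdAB j hj)) r
        · rfl
      · simp
    simp only [h1]
    rw [← Finset.sum_div, sum_margObs' p (A ∪ nbd G A) B hBE x, ← hnbdB_eq]
  rw [hden, hPAIB x, hPAIA x]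
  unfold condObs
  rw [← hNN]
  have key : ∀ a b c : ℝ, b ≠ 0 → a / c = a / b / (c / b) := by
    intro a b c hb
    by_cases hc : c = 0
    · simp [hc]
    · field_simp
  exact key _ _ _ hbA
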